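/- Let M₀ : ℝ → ℂ be differentiable, h : ℝ → ℝ a function, and define M : ℝ³ → ℂ by M(u,x,y) = M₀(u) and H : ℝ³ → ℝ by H(u,x,y) = x·Re(M₀′(u)) + y·Im(M₀′(u)) + h(u). Then the following six expressions vanish identically on ℝ³: ∂_x(Re M) − i·∂_y(Im M); ∂_x(Im M) − i·∂_y(Re M); ∂_x(Re M) + i·∂_y(Im M); ∂_x(Im M) + i·∂_y(Re M); ∂_x M̄ − i·∂_y M̄; and M̄·(∂_x M̄ + i·∂_y M̄) + M·(∂_x M̄ − i·∂_y M̄) − ∂_u M̄ + ∂_xH − i·∂_yH (where M̄ denotes the complex conjugate of M). -/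

import Mathlib

/-!
`M` does not depend on `x, y`, so all its `x`- and `y`-derivatives vanish, while `H` is affine
in `(x, y)` with slope `(Re M₀′, Im M₀′)`. Hence `∂ₓH − i ∂ᵧH = conj M₀′ = ∂ᵤ M̄`, and these two
terms cancel in `T̂₂₂₃`.
-/

open Complex
open ComplexConjugate

/- The casts `(deriv (fun x' => H u x' y) x : ℂ)` in the statement elaborate to derivatives of
the `ℂ`-valued functions `fun x' => (H u x' y : ℂ)`. -/
theorem deriv_ofReal_comp (f : ℝ → ℝ) (t : ℝ) : deriv (fun s => (f s : ℂ)) t = deriv f t := by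
  by_cases hf : DifferentiableAt ℝ f t
  · exact hf.hasDerivAt.ofReal_comp.deriv
  · have hf' : ¬DifferentiableAt ℝ (fun s => (f s : ℂ)) t := fun h' =>
      hf (reCLM.differentiableAt.comp t h')
    rw [deriv_zero_of_not_differentiableAt hf, deriv_zero_of_not_differentiableAt hf', ofReal_zero]

theorem ofReal_re_sub_I_mul_ofReal_im (z : ℂ) : (z.re : ℂ) - I * z.im = conj z := by
  apply Complex.ext <;> simp

theorem teleparallel_ppwave_torsion_vanishes_general
    (M₀ : ℝ → ℂ) (h : ℝ → ℝ)
    (M : ℝ → ℝ → ℝ → ℂ) (H : ℝ → ℝ → ℝ → ℝ)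
    (hM : ∀ u x y : ℝ, M u x y = M₀ u)
    (hH : ∀ u x y : ℝ,
      H u x y = x * (deriv M₀ u).re + y * (deriv M₀ u).im + h u) :
    ∀ u x y : ℝ,
      (deriv (fun x' => (M u x' y).re) x : ℂ)
        - Complex.I * (deriv (fun y' => (M u x y').im) y : ℂ) = 0 ∧
      (deriv (fun x' => (M u x' y).im) x : ℂ)
        - Complex.I * (deriv (fun y' => (M u x y').re) y : ℂ) = 0 ∧
      (deriv (fun x' => (M u x' y).re) x : ℂ)
        + Complex.I * (deriv (fun y' => (M u x y').im) y : ℂ) = 0 ∧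
      (deriv (fun x' => (M u x' y).im) x : ℂ)
        + Complex.I * (deriv (fun y' => (M u x y').re) y : ℂ) = 0 ∧
      deriv (fun x' => (starRingEnd ℂ) (M u x' y)) x
        - Complex.I * deriv (fun y' => (starRingEnd ℂ) (M u x y')) y = 0 ∧
      (starRingEnd ℂ) (M u x y)
          * (deriv (fun x' => (starRingEnd ℂ) (M u x' y)) x
            + Complex.I * deriv (fun y' => (starRingEnd ℂ) (M u x y')) y)
        + M u x y
          * (deriv (fun x' => (starRingEnd ℂ) (M u x' y)) x
            - Complex.I * deriv (fun y' => (starRingEnd ℂ) (M u x y')) y)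
        - deriv (fun u' => (starRingEnd ℂ) (M u' x y)) u
        + (deriv (fun x' => H u x' y) x : ℂ)
        - Complex.I * (deriv (fun y' => H u x y') y : ℂ) = 0 := by
  intro u x y
  have hHx : deriv (fun x' => (H u x' y : ℂ)) x = (deriv M₀ u).re := by
    simp only [hH]
    rw [deriv_ofReal_comp]
    simp
  have hHy : deriv (fun y' => (H u x y' : ℂ)) y = (deriv M₀ u).im := by
    simp only [hH]
    rw [deriv_ofReal_comp]
    simp
  have hMu : deriv (fun u' => conj (M u' x y)) u = conj (deriv M₀ u) := by
    simp only [hM]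
    exact deriv.star
  rw [hMu, hHx, hHy, add_sub_assoc, ofReal_re_sub_I_mul_ofReal_im]
  simp [hM]

/-- Verification: for M = M₀(u) and H = x·Re M₀′ + y·Im M₀′ + h(u), all the torsion
components of the teleparallel pp-wave proper coframe vanish identically. -/
theorem teleparallel_ppwave_torsion_vanishes
    (M₀ : ℝ → ℂ) (hM₀ : Differentiable ℝ M₀) (h : ℝ → ℝ)
    (M : ℝ → ℝ → ℝ → ℂ) (H : ℝ → ℝ → ℝ → ℝ)
    (hM : ∀ u x y : ℝ, M u x y = M₀ u)
    (hH : ∀ u x y : ℝ,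
      H u x y = x * (deriv M₀ u).re + y * (deriv M₀ u).im + h u) :
    ∀ u x y : ℝ,
      (deriv (fun x' => (M u x' y).re) x : ℂ)
        - Complex.I * (deriv (fun y' => (M u x y').im) y : ℂ) = 0 ∧
      (deriv (fun x' => (M u x' y).im) x : ℂ)
        - Complex.I * (deriv (fun y' => (M u x y').re) y : ℂ) = 0 ∧
      (deriv (fun x' => (M u x' y).re) x : ℂ)
        + Complex.I * (deriv (fun y' => (M u x y').im) y : ℂ) = 0 ∧
      (deriv (fun x' => (M u x' y).im) x : ℂ)
        + Complex.I * (deriv (fun y' => (M u x y').re) y : ℂ) = 0 ∧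
      deriv (fun x' => (starRingEnd ℂ) (M u x' y)) x
        - Complex.I * deriv (fun y' => (starRingEnd ℂ) (M u x y')) y = 0 ∧
      (starRingEnd ℂ) (M u x y)
          * (deriv (fun x' => (starRingEnd ℂ) (M u x' y)) x
            + Complex.I * deriv (fun y' => (starRingEnd ℂ) (M u x y')) y)
        + M u x y
          * (deriv (fun x' => (starRingEnd ℂ) (M u x' y)) x
            - Complex.I * deriv (fun y' => (starRingEnd ℂ) (M u x y')) y)
        - deriv (fun u' => (starRingEnd ℂ) (M u' x y)) u
        + (deriv (fun x' => H u x' y) x : ℂ)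
        - Complex.I * (deriv (fun y' => H u x y') y : ℂ) = 0 :=
  teleparallel_ppwave_torsion_vanishes_general M₀ h M H hM hH
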